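/- For any parking function (a_1, ..., a_{n-1}) of length n-1, there exists a unique index j (with a_1+1 < j ≤ n or j = 1, interpreted cyclically) such that the terms of (a_2,...,a_{n-1}) lying in {a_1+1, ..., j-1} number exactly j - a_1 - 2 and, when sorted increasingly, the k-th such term is at most a_1 + k. -/

import Mathlib

/-!
Write `c = a_1` and `f t` for the number of `a_2, …, a_{n-1}` in `{c+1, …, c+1+t}`. In an
increasingly sorted list the `k`-th entry is `≤ v` iff more than `k` entries are `≤ v`, so
`j = c+2+t` has the required properties iff `f t = t` and `k < f k` for all `k < t`; as `f` is
monotone, this singles out the least `t` with `f t ≤ t`. The parking condition puts at least `c`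
of the values at or below `c`, so `f ≤ n-1-c`, which gives such a `t` and keeps `j ≤ n+1`.
-/

/-- A parking function of length `m`: values in `{1,…,m}` whose increasing
rearrangement `a'` satisfies `a'_i ≤ i` for all `i`. -/
def IsParkingFunction (m : ℕ) (a : Fin m → ℕ) : Prop :=
  (∀ k : Fin m, 1 ≤ a k ∧ a k ≤ m) ∧
    ∀ i : Fin m, ((List.ofFn a).mergeSort (· ≤ ·))[i.val]! ≤ i.val + 1

theorem List.Pairwise.getElem_le_iff_lt_countP {α : Type*} [LinearOrder α] {l : List α}
    (hl : l.Pairwise (· ≤ ·)) {k : ℕ} (hk : k < l.length) (v : α) :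
    l[k] ≤ v ↔ k < l.countP (· ≤ v) := by
  induction l generalizing k with
  | nil => simp at hk
  | cons x t ih =>
    rw [List.pairwise_cons] at hl
    by_cases hx : x ≤ v
    · cases k with
      | zero => simp [hx]
      | succ k => simp [hx, ih hl.2]
    · have htv : t.countP (· ≤ v) = 0 :=
        List.countP_eq_zero.2 fun y hy => by simpa using (lt_of_not_ge hx).trans_le (hl.1 y hy)
      cases k with
      | zero => simp [hx, htv]
      | succ k => simp [hx, ih hl.2, htv]

theorem Multiset.sort_getElem!_le_iff_lt_countP {α : Type*} [LinearOrder α] [Inhabited α]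
    {s : Multiset α} {k : ℕ} (hk : k < card s) (v : α) :
    (s.sort (· ≤ ·))[k]! ≤ v ↔ k < s.countP (· ≤ v) := by
  have hk' : k < (s.sort (· ≤ ·)).length := by rwa [Multiset.length_sort]
  rw [getElem!_pos (s.sort (· ≤ ·)) k hk',
    (Multiset.pairwise_sort s _).getElem_le_iff_lt_countP hk', ← Multiset.coe_countP,
    Multiset.sort_eq]

theorem IsParkingFunction.le_countP_le {m : ℕ} {a : Fin m → ℕ} (ha : IsParkingFunction m a)
    {v : ℕ} (hv : v ≤ m) : v ≤ (Finset.univ.val.map a).countP (· ≤ v) := by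
  obtain _ | v := v
  · exact Nat.zero_le _
  have hsorted := List.pairwise_mergeSort' (· ≤ ·) (List.ofFn a)
  have hlen : v < ((List.ofFn a).mergeSort (· ≤ ·)).length := by simpa using hv
  have hv' := ha.2 ⟨v, hv⟩
  rw [getElem!_pos _ v hlen, hsorted.getElem_le_iff_lt_countP hlen,
    (List.mergeSort_perm _ _).countP_eq] at hv'
  rwa [Fin.univ_val_map, Multiset.coe_countP]

theorem IsParkingFunction.countP_lt_le_sub {m : ℕ} {a : Fin m → ℕ}
    (ha : IsParkingFunction m a) {c : ℕ} (hc : c ≤ m) :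
    (Finset.univ.val.map a).countP (c < ·) ≤ m - c := by
  have hsplit := Multiset.card_eq_countP_add_countP (· ≤ c) (Finset.univ.val.map a)
  simp only [not_le, Multiset.card_map, Finset.card_val, Finset.card_univ,
    Fintype.card_fin] at hsplit
  have := ha.le_countP_le hc
  omega

theorem Monotone.existsUnique_first_fixedPoint {f : ℕ → ℕ} (hf : Monotone f) {B : ℕ}
    (hB : ∀ k, f k ≤ B) : ∃! t, t ≤ B ∧ f t = t ∧ ∀ k < t, k < f k := by
  have hex : ∃ t, f t ≤ t := ⟨B, hB B⟩
  have hmin : ∀ k < Nat.find hex, k < f k := fun k hk => not_le.1 (Nat.find_min hex hk)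
  refine ⟨Nat.find hex, ⟨Nat.find_min' hex (hB B), ?_, hmin⟩, ?_⟩
  · refine le_antisymm (Nat.find_spec hex) ?_
    rcases Nat.eq_zero_or_pos (Nat.find hex) with h0 | hpos
    · omega
    · have := hmin _ (Nat.sub_one_lt_of_lt hpos)
      have := hf (Nat.sub_le (Nat.find hex) 1)
      omega
  · rintro t ⟨-, hft, hlt⟩
    refine le_antisymm ?_ (Nat.find_min' hex hft.le)
    by_contra! h
    have := hlt _ h
    have := Nat.find_spec hex
    omega

theorem Multiset.card_filter_Icc_eq_and_sort_le_iff (T : Multiset ℕ) (c t : ℕ) :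
    (card (T.filter fun x => c + 1 ≤ x ∧ x ≤ c + 1 + t) = t ∧
        ∀ k < t, (sort (T.filter fun x => c + 1 ≤ x ∧ x ≤ c + 1 + t))[k]! ≤ c + k + 1) ↔
      card (T.filter fun x => c + 1 ≤ x ∧ x ≤ c + 1 + t) = t ∧
        ∀ k < t, k < card (T.filter fun x => c + 1 ≤ x ∧ x ≤ c + 1 + k) :=
  and_congr_right fun hcard => forall₂_congr fun k hk => by
    rw [sort_getElem!_le_iff_lt_countP (by rwa [hcard]), countP_filter, countP_eq_card_filter]
    congr! 3
    omega

/-- For any parking function `(a_1, …, a_{n-1})` of length `n-1`, there exists a unique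
`j` with `a_1 + 1 < j ≤ n` or `j = 1` (interpreted cyclically, with `j = 1` represented
by `j = n+1`) such that the terms of `(a_2, …, a_{n-1})` lying in `{a_1+1, …, j-1}`
number exactly `j - a_1 - 2` and, when sorted increasingly, the `k`-th such term is at
most `a_1 + k`. -/
theorem parking_function_splitting (n : ℕ) (hn : 2 ≤ n) (a : Fin (n - 1) → ℕ)
    (hpf : IsParkingFunction (n - 1) a) :
    ∃! j : ℕ,
      (a ⟨0, by omega⟩ + 1 < j ∧ j ≤ n + 1) ∧
      (Multiset.card
          (((Finset.univ.filter (fun i : Fin (n - 1) => 0 < i.val)).val.map a).filter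
            (fun x => a ⟨0, by omega⟩ + 1 ≤ x ∧ x ≤ j - 1)) = j - a ⟨0, by omega⟩ - 2) ∧
      (∀ k : ℕ, k < j - a ⟨0, by omega⟩ - 2 →
        (Multiset.sort
            (((Finset.univ.filter (fun i : Fin (n - 1) => 0 < i.val)).val.map a).filter
              (fun x => a ⟨0, by omega⟩ + 1 ≤ x ∧ x ≤ j - 1)) (· ≤ ·))[k]! ≤
          a ⟨0, by omega⟩ + k + 1) := by
  set c := a ⟨0, by omega⟩
  set T := (Finset.univ.filter (fun i : Fin (n - 1) => 0 < i.val)).val.map a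
  set f : ℕ → ℕ := fun k => Multiset.card (T.filter fun x => c + 1 ≤ x ∧ x ≤ c + 1 + k)
  have hc : c ≤ n - 1 := (hpf.1 _).2
  have hf : Monotone f := fun k l hkl =>
    Multiset.card_le_card (Multiset.monotone_filter_right T fun x hx => ⟨hx.1, by omega⟩)
  have hB : ∀ k, f k ≤ n - 1 - c := fun k => by
    refine le_trans ?_ (hpf.countP_lt_le_sub hc)
    rw [Multiset.countP_eq_card_filter]
    exact Multiset.card_le_card <|
      (Multiset.monotone_filter_right T fun x hx => by omega).trans
        (Multiset.filter_le_filter _ (Multiset.map_le_map (Multiset.filter_le _ _)))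
  have hj : ∀ t, t + c + 2 - 1 = c + 1 + t ∧ t + c + 2 - c - 2 = t := fun t => by omega
  obtain ⟨t, ⟨htB, ht⟩, huniq⟩ := hf.existsUnique_first_fixedPoint hB
  refine ⟨t + c + 2, ⟨⟨by omega, by omega⟩, ?_⟩, ?_⟩
  · simp only [hj]
    exact (T.card_filter_Icc_eq_and_sort_le_iff c t).2 ht
  · rintro j ⟨hjc, hcond⟩
    obtain ⟨s, rfl⟩ : ∃ s, j = s + c + 2 := ⟨j - c - 2, by omega⟩
    simp only [hj] at hcond
    rw [huniq s ⟨by omega, (T.card_filter_Icc_eq_and_sort_le_iff c s).1 hcond⟩]
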